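/- arXiv:1204.0495 — 2 statements merged into one kernel-verified Lean document; each statement's English description precedes it below -/
import Mathlib

section
/- Let H be a connected finite simple graph of order n ≥ 2 with diameter two. Then dim_s(H) = n − ϖ(H). -/
open SimpleGraph

/-- A vertex `w` strongly resolves the pair `u`, `v` if `v` lies on some shortest `u`–`w`
path or `u` lies on some shortest `v`–`w` path. -/
def StronglyResolves {V : Type*} (G : SimpleGraph V) (w u v : V) : Prop :=
  G.dist u w = G.dist u v + G.dist v w ∨ G.dist v w = G.dist v u + G.dist u w

/-- `S` is a strong resolving set for `G` if every pair of distinct vertices is strongly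
resolved by some vertex of `S`. -/
def IsStrongResolvingSet {V : Type*} (G : SimpleGraph V) (S : Set V) : Prop :=
  ∀ u v : V, u ≠ v → ∃ w ∈ S, StronglyResolves G w u v

/-- The strong metric dimension: the minimum cardinality of a strong resolving set. -/
noncomputable def strongDim {V : Type*} (G : SimpleGraph V) [Fintype V] : ℕ :=
  sInf {k | ∃ S : Finset V, IsStrongResolvingSet G ↑S ∧ S.card = k}

/-- The closed neighborhood of a vertex. -/
def closedNbhd {V : Type*} (G : SimpleGraph V) (v : V) : Set V :=
  insert v (G.neighborSet v)

/-- A twin-free clique: a clique containing no pair of true twins. -/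
def IsTwinFreeClique {V : Type*} (G : SimpleGraph V) (X : Finset V) : Prop :=
  G.IsClique ↑X ∧ ∀ u ∈ X, ∀ v ∈ X, u ≠ v → closedNbhd G u ≠ closedNbhd G v

/-- The twin-free clique number: maximum cardinality of a twin-free clique. -/
noncomputable def twinFreeCliqueNum {V : Type*} (G : SimpleGraph V) [Fintype V] : ℕ :=
  sSup {k | ∃ X : Finset V, IsTwinFreeClique G X ∧ X.card = k}

/-- Adjacency relation of the join of two graphs. -/
def joinAdj {V W : Type*} (G : SimpleGraph V) (H : SimpleGraph W) :
    V ⊕ W → V ⊕ W → Prop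
  | Sum.inl a, Sum.inl b => G.Adj a b
  | Sum.inr a, Sum.inr b => H.Adj a b
  | Sum.inl _, Sum.inr _ => True
  | Sum.inr _, Sum.inl _ => True

/-- The join `G + H`: disjoint union of `G` and `H` plus all edges between them. -/
def joinGraph {V W : Type*} (G : SimpleGraph V) (H : SimpleGraph W) :
    SimpleGraph (V ⊕ W) where
  Adj := joinAdj G H
  symm := ⟨by
    rintro (a | a) (b | b) h
    · exact G.adj_symm h
    · trivial
    · trivial
    · exact H.adj_symm h⟩
  loopless := ⟨by
    rintro (a | a) h
    · exact G.irrefl h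
    · exact H.irrefl h⟩

/-- Adjacency relation of the corona product `G ⊙ H`. -/
def coronaAdj {V W : Type*} (G : SimpleGraph V) (H : SimpleGraph W) :
    V ⊕ V × W → V ⊕ V × W → Prop
  | Sum.inl a, Sum.inl b => G.Adj a b
  | Sum.inr p, Sum.inr q => p.1 = q.1 ∧ H.Adj p.2 q.2
  | Sum.inl a, Sum.inr q => a = q.1
  | Sum.inr p, Sum.inl b => p.1 = b

/-- The corona product `G ⊙ H`: one copy of `G` and one copy of `H` for each vertex of
`G`, with the `i`-th vertex of `G` joined to every vertex of the `i`-th copy of `H`. -/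
def corona {V W : Type*} (G : SimpleGraph V) (H : SimpleGraph W) :
    SimpleGraph (V ⊕ V × W) where
  Adj := coronaAdj G H
  symm := ⟨by
    rintro (a | p) (b | q) h
    · exact G.adj_symm h
    · exact h.symm
    · exact h.symm
    · exact ⟨h.1.symm, H.adj_symm h.2⟩⟩
  loopless := ⟨by
    rintro (a | p) h
    · exact G.irrefl h
    · exact H.irrefl h.2⟩

/-- The disjoint union of copies of `H`, one copy for each element of `V`. -/
def copies (V : Type*) {W : Type*} (H : SimpleGraph W) : SimpleGraph (V × W) where
  Adj p q := p.1 = q.1 ∧ H.Adj p.2 q.2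
  symm := ⟨fun _ _ h => ⟨h.1.symm, h.2.symm⟩⟩
  loopless := ⟨fun p h => H.irrefl h.2⟩

/-- The algebraic connectivity: the second smallest eigenvalue (with multiplicity,
in nondecreasing order) of the Laplacian matrix. -/
noncomputable def algebraicConnectivity {V : Type*} (G : SimpleGraph V) [Fintype V]
    [DecidableEq V] [DecidableRel G.Adj] : ℝ :=
  (((Finset.univ.val.map ((G.posSemidef_lapMatrix ℝ).isHermitian.eigenvalues)).sort
    (· ≤ ·)).getD 1 0)

/-!
In a graph of diameter at most two, the distance between distinct vertices is 1 or 2 according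
as they are adjacent or not. Hence a vertex `w` other than `u` and `v` strongly resolves `u, v`
exactly when `u, v` are adjacent and `w` is adjacent to one of them but not the other.
Consequently `S` is a strong resolving set if and only if its complement is a clique without
true twins, and complementation turns a minimum strong resolving set into a maximum twin-free
clique.
-/

open SimpleGraph Finset

namespace SimpleGraph

variable {V : Type*} {G : SimpleGraph V} {u v w : V}

open scoped Classical in
lemma dist_eq_ite_of_ediam_le_two (hG : G.ediam ≤ 2) (huv : u ≠ v) :
    G.dist u v = if G.Adj u v then 1 else 2 := by
  have hedist : G.edist u v ≤ 2 := edist_le_ediam.trans hG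
  have hreach : G.Reachable u v :=
    edist_ne_top_iff_reachable.mp (ne_top_of_le_ne_top (by decide) hedist)
  have hle : G.dist u v ≤ 2 := by exact_mod_cast hreach.coe_dist_eq_edist ▸ hedist
  have hpos := hreach.pos_dist_of_ne huv
  split_ifs with hadj
  · exact dist_eq_one_iff_adj.mpr hadj
  · have : G.dist u v ≠ 1 := mt dist_eq_one_iff_adj.mp hadj
    omega

lemma closedNbhd_eq_closedNbhd_iff_of_adj (huv : G.Adj u v) :
    closedNbhd G u = closedNbhd G v ↔ ∀ w, w ≠ u → w ≠ v → (G.Adj u w ↔ G.Adj v w) := by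
  simp only [closedNbhd, Set.ext_iff, Set.mem_insert_iff, mem_neighborSet]
  refine ⟨fun h w hwu hwv => by simpa [hwu, hwv] using h w, fun h w => ?_⟩
  by_cases hwu : w = u
  · subst hwu; simp [huv.symm]
  by_cases hwv : w = v
  · subst hwv; simp [huv]
  simp [hwu, hwv, h w hwu hwv]

lemma stronglyResolves_left (G : SimpleGraph V) (u v : V) : StronglyResolves G u u v :=
  Or.inr (by simp)

lemma stronglyResolves_right (G : SimpleGraph V) (u v : V) : StronglyResolves G v u v :=
  Or.inl (by simp)

lemma stronglyResolves_iff_of_ediam_le_two (hG : G.ediam ≤ 2) (huv : u ≠ v) (hwu : w ≠ u)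
    (hwv : w ≠ v) :
    StronglyResolves G w u v ↔ G.Adj u v ∧ ¬(G.Adj u w ↔ G.Adj v w) := by
  unfold StronglyResolves
  rw [dist_eq_ite_of_ediam_le_two hG huv, dist_eq_ite_of_ediam_le_two hG huv.symm,
    dist_eq_ite_of_ediam_le_two hG hwu.symm, dist_eq_ite_of_ediam_le_two hG hwv.symm,
    G.adj_comm v u]
  by_cases huv : G.Adj u v <;> by_cases huw : G.Adj u w <;> by_cases hvw : G.Adj v w <;>
    simp [huv, huw, hvw]

theorem isStrongResolvingSet_iff_isTwinFreeClique_compl [Fintype V] [DecidableEq V]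
    (hG : G.ediam ≤ 2) (S : Finset V) :
    IsStrongResolvingSet G S ↔ IsTwinFreeClique G Sᶜ := by
  constructor
  · intro hS
    have hresolves {u v} (hu : u ∉ S) (hv : v ∉ S) (huv : u ≠ v) :
        G.Adj u v ∧ ∃ w ∈ S, ¬(G.Adj u w ↔ G.Adj v w) := by
      obtain ⟨w, hw, hres⟩ := hS u v huv
      have h := (stronglyResolves_iff_of_ediam_le_two hG huv (ne_of_mem_of_not_mem hw hu)
        (ne_of_mem_of_not_mem hw hv)).mp hres
      exact ⟨h.1, w, hw, h.2⟩
    refine ⟨fun u hu v hv huv => (hresolves (by simpa using hu) (by simpa using hv) huv).1,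
      fun u hu v hv huv htwin => ?_⟩
    rw [mem_compl] at hu hv
    obtain ⟨hadj, w, hw, hdiff⟩ := hresolves hu hv huv
    exact hdiff ((closedNbhd_eq_closedNbhd_iff_of_adj hadj).mp htwin w
      (ne_of_mem_of_not_mem hw hu) (ne_of_mem_of_not_mem hw hv))
  · rintro ⟨hclique, htwinFree⟩ u v huv
    by_cases hu : u ∈ S
    · exact ⟨u, hu, stronglyResolves_left G u v⟩
    by_cases hv : v ∈ S
    · exact ⟨v, hv, stronglyResolves_right G u v⟩
    have hadj : G.Adj u v := hclique (by simpa using hu) (by simpa using hv) huv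
    have hnot_twins := htwinFree u (mem_compl.mpr hu) v (mem_compl.mpr hv) huv
    simp only [Ne, closedNbhd_eq_closedNbhd_iff_of_adj hadj, not_forall] at hnot_twins
    obtain ⟨w, hwu, hwv, hdiff⟩ := hnot_twins
    -- a vertex outside `S` would be adjacent to both `u` and `v`
    have hw : w ∈ S := by
      by_contra hw
      exact hdiff (iff_of_true (hclique (by simpa using hu) (by simpa using hw) (Ne.symm hwu))
        (hclique (by simpa using hv) (by simpa using hw) (Ne.symm hwv)))
    exact ⟨w, hw, (stronglyResolves_iff_of_ediam_le_two hG huv hwu hwv).mpr ⟨hadj, hdiff⟩⟩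

lemma ediam_le_two_of_diam_eq_two (h : G.diam = 2) : G.ediam ≤ 2 := by
  rw [← ENat.natCast_toNat (ediam_ne_top_of_diam_ne_zero (h ▸ two_ne_zero))]
  exact_mod_cast h.le

end SimpleGraph

lemma isTwinFreeClique_empty {V : Type*} (G : SimpleGraph V) : IsTwinFreeClique G ∅ :=
  ⟨by simp, by simp⟩

theorem Finset.sInf_card_eq_card_sub_sSup_card_compl {α : Type*} [Fintype α] [DecidableEq α]
    {P Q : Finset α → Prop} (hPQ : ∀ S, P S ↔ Q Sᶜ) (hQ : Q ∅) :
    sInf {k | ∃ S, P S ∧ S.card = k} = Fintype.card α - sSup {k | ∃ X, Q X ∧ X.card = k} := by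
  set A := {k | ∃ S, P S ∧ S.card = k}
  set B := {k | ∃ X, Q X ∧ X.card = k}
  have hbdd : BddAbove B := ⟨Fintype.card α, by rintro _ ⟨X, -, rfl⟩; exact card_le_univ X⟩
  have hB : B.Nonempty := ⟨0, ∅, hQ, card_empty⟩
  obtain ⟨X, hX, hXcard⟩ := Nat.sSup_mem hB hbdd
  have hXc : P Xᶜ := (hPQ _).mpr (by rwa [compl_compl])
  have hle : sInf A ≤ Fintype.card α - X.card := Nat.sInf_le ⟨Xᶜ, hXc, card_compl X⟩
  have hA : A.Nonempty := ⟨_, Xᶜ, hXc, rfl⟩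
  obtain ⟨S, hS, hScard⟩ := Nat.sInf_mem hA
  have hge : Fintype.card α - S.card ≤ sSup B := le_csSup hbdd ⟨Sᶜ, (hPQ S).mp hS, card_compl S⟩
  have := card_le_univ S
  have := card_le_univ X
  omega

theorem strongDim_eq_card_sub_twinFreeCliqueNum_of_diam_two_general {V : Type*} [Fintype V]
    (H : SimpleGraph V) (hdiam : H.diam = 2) :
    strongDim H = Fintype.card V - twinFreeCliqueNum H := by
  classical
  exact Finset.sInf_card_eq_card_sub_sSup_card_compl
    (isStrongResolvingSet_iff_isTwinFreeClique_compl (ediam_le_two_of_diam_eq_two hdiam))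
    (isTwinFreeClique_empty H)

/-- Let `H` be a connected finite simple graph of order `n ≥ 2` with
diameter two. Then `dim_s(H) = n − ϖ(H)`. -/
theorem strongDim_eq_card_sub_twinFreeCliqueNum_of_diam_two {V : Type*} [Fintype V]
    (H : SimpleGraph V) (hconn : H.Connected) (hn : 2 ≤ Fintype.card V)
    (hdiam : H.diam = 2) :
    strongDim H = Fintype.card V - twinFreeCliqueNum H :=
  strongDim_eq_card_sub_twinFreeCliqueNum_of_diam_two_general H hdiam
end

section
/- Let G be a connected non-complete finite simple graph of order n, maximum degree Δ, and algebraic connectivity μ (the second smallest eigenvalue of the Laplacian matrix of G, with eigenvalues listed in nondecreasing order with multiplicity). Then the clique number of G satisfies ω(G) ≤ n(Δ − μ + 1)/(n − μ). -/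
open SimpleGraph

/-!
For a vertex set `S`, the vector equal to `|Sᶜ|` on `S` and to `-|S|` off `S` is orthogonal to
the all-ones vector, which lies in the kernel of the Laplacian. If a positive semidefinite matrix
kills `u`, its second smallest eigenvalue bounds the Rayleigh quotient of every `x ⊥ u` from
below, so this vector gives the cut bound `μ |S| |Sᶜ| ≤ n e(S, Sᶜ)`. A vertex
of a clique `X` of size `ω` has at most `Δ + 1 - ω` neighbours outside `X`, so the cut bound for
`X` yields `μ (n - ω) ≤ n (Δ + 1 - ω)`. The cut bound for a vertex with a non-neighbour shows
`μ < n`, so the inequality can be divided by `n - μ`.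
-/

open Finset Matrix

theorem Multiset.getD_one_sort_le_max {α : Type*} [LinearOrder α] {m : Multiset α} {a b : α}
    (h : a ::ₘ {b} ≤ m) (d : α) : (m.sort (· ≤ ·)).getD 1 d ≤ max a b := by
  have hsorted := m.pairwise_sort (· ≤ ·)
  have hcount : 2 ≤ ((m.sort (· ≤ ·)).filter (· ≤ max a b)).length := by
    have := Multiset.card_le_card (Multiset.filter_le_filter (· ≤ max a b) h)
    rwa [← m.sort_eq (· ≤ ·), Multiset.filter_coe, Multiset.coe_card,
      Multiset.filter_cons_of_pos (p := (· ≤ max a b)) _ (le_max_left a b),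
      Multiset.filter_singleton, if_pos (le_max_right a b)] at this
  generalize m.sort (· ≤ ·) = l at hsorted hcount
  -- if the second entry exceeded `max a b`, only the head of the sorted list could be `≤ max a b`
  by_contra! hlt
  have hshort : ∀ x, ([x].filter (· ≤ max a b)).length < 2 := fun x =>
    (List.length_filter_le _ [x]).trans_lt one_lt_two
  match l, hsorted, hcount, hlt with
  | [], _, hcount, _ => simp at hcount
  | [x], _, hcount, _ => exact (hshort x).not_ge hcount
  | x :: y :: rest, hsorted, hcount, hlt =>
    have hrest : ∀ z ∈ rest, max a b < z := fun z hz =>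
      hlt.trans_le (List.rel_of_pairwise_cons (List.pairwise_cons.1 hsorted).2 hz)
    have hy : ¬ y ≤ max a b := (hlt : max a b < y).not_ge
    have hfilter : (x :: y :: rest).filter (· ≤ max a b) = [x].filter (· ≤ max a b) := by
      have hnil : rest.filter (· ≤ max a b) = [] := by
        simpa [List.filter_eq_nil_iff] using hrest
      simp only [List.filter_cons, hy, decide_false, hnil, List.filter_nil]
      rfl
    exact (hshort x).not_ge (hfilter ▸ hcount)

namespace Matrix.IsHermitian

variable {n : Type*} [Fintype n] [DecidableEq n] {A : Matrix n n ℝ} (hA : A.IsHermitian)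

noncomputable def secondSmallestEigenvalue : ℝ :=
  ((univ.val.map hA.eigenvalues).sort (· ≤ ·)).getD 1 0

theorem secondSmallestEigenvalue_le_max {i j : n} (hij : i ≠ j) :
    hA.secondSmallestEigenvalue ≤ max (hA.eigenvalues i) (hA.eigenvalues j) := by
  refine Multiset.getD_one_sort_le_max ?_ 0
  have hsub : ({i, j} : Finset n).val ≤ univ.val := Finset.val_le_iff.2 (subset_univ _)
  simpa [Finset.insert_val_of_notMem (Finset.notMem_singleton.2 hij)] using
    Multiset.map_le_map (f := hA.eigenvalues) hsub

theorem eigenvectorBasis_dotProduct_mulVec (i : n) (x : n → ℝ) :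
    ⇑(hA.eigenvectorBasis i) ⬝ᵥ A *ᵥ x = hA.eigenvalues i * (⇑(hA.eigenvectorBasis i) ⬝ᵥ x) := by
  rw [dotProduct_mulVec, ← mulVec_transpose, ← conjTranspose_eq_transpose_of_trivial, hA.eq,
    mulVec_eigenvectorBasis, smul_dotProduct, smul_eq_mul]

theorem sum_eigenvectorBasis_dotProduct_mul (x y : n → ℝ) :
    ∑ i, (⇑(hA.eigenvectorBasis i) ⬝ᵥ x) * (⇑(hA.eigenvectorBasis i) ⬝ᵥ y) = x ⬝ᵥ y := by
  have := hA.eigenvectorBasis.sum_inner_mul_inner (WithLp.toLp 2 x) (WithLp.toLp 2 y)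
  simpa only [EuclideanSpace.inner_eq_star_dotProduct, star_trivial, dotProduct_comm y]
    using this

theorem dotProduct_mulVec_eq_sum (x : n → ℝ) :
    x ⬝ᵥ A *ᵥ x = ∑ i, hA.eigenvalues i * (⇑(hA.eigenvectorBasis i) ⬝ᵥ x) ^ 2 := by
  rw [← hA.sum_eigenvectorBasis_dotProduct_mul]
  refine sum_congr rfl fun i _ => ?_
  rw [hA.eigenvectorBasis_dotProduct_mulVec]
  ring

end Matrix.IsHermitian

theorem Matrix.PosSemidef.secondSmallestEigenvalue_mul_dotProduct_self_le {n : Type*} [Fintype n]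
    [DecidableEq n] {A : Matrix n n ℝ} (hA : A.PosSemidef) {u x : n → ℝ}
    (hu : u ≠ 0) (hAu : A *ᵥ u = 0) (hxu : x ⬝ᵥ u = 0) :
    hA.isHermitian.secondSmallestEigenvalue * (x ⬝ᵥ x) ≤ x ⬝ᵥ A *ᵥ x := by
  set hH := hA.isHermitian
  set μ := hH.secondSmallestEigenvalue
  have hker : ∀ i, hH.eigenvalues i * (⇑(hH.eigenvectorBasis i) ⬝ᵥ u) = 0 := fun i => by
    rw [← hH.eigenvectorBasis_dotProduct_mulVec, hAu, dotProduct_zero]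
  obtain ⟨i₀, hi₀⟩ : ∃ i, ⇑(hH.eigenvectorBasis i) ⬝ᵥ u ≠ 0 := by
    by_contra! h
    have := hH.sum_eigenvectorBasis_dotProduct_mul u u
    simp only [h, mul_zero, sum_const_zero] at this
    exact hu (dotProduct_self_eq_zero.1 this.symm)
  have heig₀ : hH.eigenvalues i₀ = 0 := (mul_eq_zero.1 (hker i₀)).resolve_right hi₀
  have hμ_le : ∀ i ≠ i₀, μ ≤ hH.eigenvalues i := fun i hi =>
    (hH.secondSmallestEigenvalue_le_max hi).trans_eq
      (by rw [heig₀, max_eq_left (hA.eigenvalues_nonneg i)])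
  rcases le_or_gt μ 0 with hμ | hμ
  · exact (mul_nonpos_of_nonpos_of_nonneg hμ (by simpa using dotProduct_star_self_nonneg x)).trans
      (by simpa using hA.dotProduct_mulVec_nonneg x)
  -- `μ > 0` makes the eigenvalue `0` simple, so `x ⊥ u` forces `x ⊥ eigenvectorBasis i₀`
  have hx₀ : ⇑(hH.eigenvectorBasis i₀) ⬝ᵥ x = 0 := by
    have hsum := hH.sum_eigenvectorBasis_dotProduct_mul x u
    rw [hxu, sum_eq_single i₀ (fun i _ hi => ?_) (by simp)] at hsum
    · exact (mul_eq_zero.1 hsum).resolve_right hi₀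
    · have := (mul_eq_zero.1 (hker i)).resolve_left (hμ.trans_le (hμ_le i hi)).ne'
      rw [this, mul_zero]
  rw [hH.dotProduct_mulVec_eq_sum, ← hH.sum_eigenvectorBasis_dotProduct_mul x x, mul_sum]
  refine sum_le_sum fun i _ => ?_
  rcases eq_or_ne i i₀ with rfl | hi
  · rw [hx₀]; simp
  · rw [← pow_two]
    exact mul_le_mul_of_nonneg_right (hμ_le i hi) (sq_nonneg _)

namespace SimpleGraph

theorem card_interedges_eq_sum {V : Type*} (G : SimpleGraph V) [DecidableRel G.Adj]
    (s t : Finset V) : #(G.interedges s t) = ∑ i ∈ s, ∑ j ∈ t, if G.Adj i j then 1 else 0 := by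
  rw [interedges_def, card_filter, sum_product]

variable {V : Type*} [Fintype V] (G : SimpleGraph V) [DecidableRel G.Adj]

theorem IsClique.card_interedges_compl_add_card_mul_card [DecidableEq V] {s : Finset V}
    (hs : G.IsClique s) : #(G.interedges s sᶜ) + #s * #s = ∑ i ∈ s, (G.degree i + 1) := by
  rw [card_interedges_eq_sum, ← smul_eq_mul, ← sum_const, ← sum_add_distrib]
  refine sum_congr rfl fun i hi => ?_
  have hnbrs : s.filter (G.Adj i) = s.erase i := by
    ext j
    simp only [mem_filter, mem_erase]
    exact ⟨fun ⟨hj, hij⟩ => ⟨hij.ne', hj⟩, fun ⟨hji, hj⟩ => ⟨hj, hs hi hj hji.symm⟩⟩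
  have hdeg := G.degree_eq_sum_if_adj (R := ℕ) i
  rw [Nat.cast_id, ← sum_add_sum_compl s] at hdeg
  rw [hdeg, ← card_erase_add_one hi, ← hnbrs, card_filter]
  ring

theorem dotProduct_lapMatrix_mulVec_ite [DecidableEq V] (s : Finset V) (a b : ℝ) :
    (fun i => if i ∈ s then a else b) ⬝ᵥ G.lapMatrix ℝ *ᵥ (fun i => if i ∈ s then a else b) =
      (a - b) ^ 2 * #(G.interedges s sᶜ) := by
  have hterm : ∀ i j, (if G.Adj i j then
      ((if i ∈ s then a else b) - (if j ∈ s then a else b)) ^ 2 else 0) =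
      (a - b) ^ 2 * ((if i ∈ s then if j ∈ sᶜ then if G.Adj i j then 1 else 0 else 0 else 0) +
        (if j ∈ s then if i ∈ sᶜ then if G.Adj j i then 1 else 0 else 0 else 0)) := by
    intro i j
    by_cases hi : i ∈ s <;> by_cases hj : j ∈ s <;> by_cases hij : G.Adj i j <;>
      simp [hi, hj, hij, G.adj_comm j i, sub_sq_comm b a]
  rw [← toLinearMap₂'_apply', lapMatrix_toLinearMap₂']
  simp_rw [hterm, ← mul_sum, sum_add_distrib]
  rw [sum_comm (f := fun i j => if j ∈ s then _ else _)]
  simp only [sum_ite_irrel, sum_const_zero, Fintype.sum_ite_mem, card_interedges_eq_sum]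
  push_cast
  ring

variable [DecidableEq V]

theorem algebraicConnectivity_mul_dotProduct_self_le (x : V → ℝ) (hx : ∑ i, x i = 0) :
    algebraicConnectivity G * (x ⬝ᵥ x) ≤ x ⬝ᵥ G.lapMatrix ℝ *ᵥ x := by
  rcases isEmpty_or_nonempty V with hV | hV
  · simp [dotProduct]
  -- `algebraicConnectivity G` is by definition the `secondSmallestEigenvalue` of the Laplacian
  exact (G.posSemidef_lapMatrix ℝ).secondSmallestEigenvalue_mul_dotProduct_self_le
    (fun h => one_ne_zero (congrFun h (Classical.arbitrary V)))
    G.lapMatrix_mulVec_const_eq_zero (by simpa [dotProduct] using hx)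

theorem algebraicConnectivity_mul_card_mul_card_compl_le (s : Finset V) :
    algebraicConnectivity G * (#s * #sᶜ) ≤ Fintype.card V * #(G.interedges s sᶜ) := by
  rcases (Fintype.card V).eq_zero_or_pos with hV | hV
  · have hs : #s = 0 := Nat.eq_zero_of_le_zero (hV ▸ card_le_univ s)
    simp [hs, hV]
  have hcard : (#s : ℝ) + #sᶜ = Fintype.card V := by exact_mod_cast card_add_card_compl s
  have hfilter : univ.filter (· ∉ s) = sᶜ := by ext; simp
  set x : V → ℝ := fun i => if i ∈ s then (#sᶜ : ℝ) else -#s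
  have hsum : ∑ i, x i = 0 := by
    simp only [x, sum_ite, filter_mem_eq_of_subset (subset_univ s), hfilter, sum_const,
      nsmul_eq_mul]
    ring
  have hself : x ⬝ᵥ x = #s * #sᶜ * Fintype.card V := by
    simp only [x, dotProduct, apply_ite (fun r : ℝ => r * r), sum_ite,
      filter_mem_eq_of_subset (subset_univ s), hfilter, sum_const, nsmul_eq_mul]
    rw [← hcard]
    ring
  have hquad : x ⬝ᵥ G.lapMatrix ℝ *ᵥ x = Fintype.card V ^ 2 * #(G.interedges s sᶜ) := by
    rw [G.dotProduct_lapMatrix_mulVec_ite, sub_neg_eq_add, add_comm, hcard]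
  have hrayleigh := G.algebraicConnectivity_mul_dotProduct_self_le x hsum
  rw [hself, hquad] at hrayleigh
  refine le_of_mul_le_mul_right ?_ (Nat.cast_pos.2 hV : (0 : ℝ) < Fintype.card V)
  linarith

theorem algebraicConnectivity_lt_card (h : G ≠ ⊤) : algebraicConnectivity G < Fintype.card V := by
  obtain ⟨u, v, huv, hnadj⟩ := ne_top_iff_exists_not_adj.1 h
  have hcut_lt : #(G.interedges {u} {u}ᶜ) < #({u} : Finset V) * #({u}ᶜ : Finset V) := by
    rw [← G.card_interedges_add_card_interedges_compl disjoint_compl_right]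
    refine Nat.lt_add_of_pos_right (card_pos.2 ⟨(u, v), ?_⟩)
    simp [mk_mem_interedges_iff, huv, huv.symm, hnadj]
  have hpos : (0 : ℝ) < #({u} : Finset V) * #({u}ᶜ : Finset V) := by
    exact_mod_cast (Nat.zero_le _).trans_lt hcut_lt
  have hn : (0 : ℝ) < Fintype.card V := Nat.cast_pos.2 (Fintype.card_pos_iff.2 ⟨u⟩)
  refine lt_of_mul_lt_mul_right ((G.algebraicConnectivity_mul_card_mul_card_compl_le {u}).trans_lt
    (mul_lt_mul_of_pos_left (by exact_mod_cast hcut_lt) hn)) hpos.le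

end SimpleGraph

theorem cliqueNum_le_of_algebraicConnectivity_general {V : Type*} [Fintype V] [DecidableEq V]
    (G : SimpleGraph V) [DecidableRel G.Adj] (hnc : G ≠ ⊤) :
    (G.cliqueNum : ℝ) ≤
      (Fintype.card V : ℝ) * ((G.maxDegree : ℝ) - algebraicConnectivity G + 1) /
        ((Fintype.card V : ℝ) - algebraicConnectivity G) := by
  obtain ⟨u, -, -, -⟩ := ne_top_iff_exists_not_adj.1 hnc
  obtain ⟨s, hs, hcard⟩ := G.exists_isNClique_cliqueNum
  have hω : 1 ≤ G.cliqueNum := IsClique.card_le_cliqueNum (t := {u}) (tc := by simp)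
  have hμ := G.algebraicConnectivity_lt_card hnc
  have hcut := G.algebraicConnectivity_mul_card_mul_card_compl_le s
  have hclique : (#(G.interedges s sᶜ) : ℝ) + #s * #s ≤ #s * (G.maxDegree + 1) := by
    exact_mod_cast hs.card_interedges_compl_add_card_mul_card.trans_le
      (sum_le_card_nsmul _ _ _ fun i _ => Nat.add_le_add_right (G.degree_le_maxDegree i) 1)
  have hcompl : (#sᶜ : ℝ) = Fintype.card V - #s := by
    rw [card_compl, Nat.cast_sub (card_le_univ s)]
  rw [hcompl, hcard] at hcut
  rw [hcard] at hclique
  have hkey : algebraicConnectivity G * (Fintype.card V - G.cliqueNum) ≤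
      Fintype.card V * (G.maxDegree + 1 - G.cliqueNum) := by
    refine le_of_mul_le_mul_left ?_ (by exact_mod_cast hω : (0 : ℝ) < G.cliqueNum)
    linarith [mul_le_mul_of_nonneg_left hclique (Nat.cast_nonneg (Fintype.card V) : (0 : ℝ) ≤ _)]
  rw [le_div_iff₀ (sub_pos.2 hμ)]
  linarith

/-- Let `G` be a connected non-complete graph of order `n`, maximum degree
`Δ` and algebraic connectivity `μ`. Then `ω(G) ≤ n(Δ − μ + 1)/(n − μ)`. -/
theorem cliqueNum_le_of_algebraicConnectivity {V : Type*} [Fintype V] [DecidableEq V]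
    (G : SimpleGraph V) [DecidableRel G.Adj] (hconn : G.Connected) (hnc : G ≠ ⊤) :
    (G.cliqueNum : ℝ) ≤
      (Fintype.card V : ℝ) * ((G.maxDegree : ℝ) - algebraicConnectivity G + 1) /
        ((Fintype.card V : ℝ) - algebraicConnectivity G) :=
  cliqueNum_le_of_algebraicConnectivity_general G hnc
end
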